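/- Let V be a vector space of dimension at least 3 over F_q (q odd) with a nondegenerate symmetric bilinear form. Let ⟨p⟩ be a nondegenerate 1-dimensional subspace and l an elliptic (minus type) nondegenerate 2-dimensional subspace such that ⟨p⟩ + l is a nondegenerate 3-dimensional subspace. Then there exist at least (q−1)/2 elliptic 2-dimensional subspaces through ⟨p⟩ that intersect l in a nondegenerate 1-dimensional subspace. -/

import Mathlib

open Module

/-- A subspace `W` is an *elliptic line* for the symmetric bilinear form `B` if it is
2-dimensional, nondegenerate, and anisotropic (contains no nonzero isotropic vector). -/
def IsEllipticLine {F V : Type*} [Field F] [AddCommGroup V] [Module F V]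
    (B : LinearMap.BilinForm F V) (W : Submodule F V) : Prop :=
  finrank F W = 2 ∧ (B.restrict W).Nondegenerate ∧ ∀ v ∈ W, B v v = 0 → v = 0

/-!
A line through `⟨p⟩` meeting `l` in a point `⟨x⟩` is `span {p, x}`, and it is elliptic
exactly when `Q(x) = B(p,x)² - B(p,p) B(x,x)`, minus the Gram determinant of `(p, x)`,
is a nonsquare. `Q` is a quadratic form on `l`, nondegenerate because `⟨p⟩ + l` is.
Writing the points of `l` as `⟨f + t • e⟩` and `⟨e⟩`, `Q` becomes a quadratic polynomial
in `t` with nonzero discriminant, and the character sum `∑ χ(a t² + 2 b t + c) = -χ(a)`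
shows that it takes nonsquare values on at least `(q - 1) / 2` of the `q + 1` points.
-/

section CharacterSums

open Finset

variable {F : Type*} [Field F] [Fintype F] [DecidableEq F]

lemma quadraticChar_sum_mul_add (hF : ringChar F ≠ 2) {c : F} (hc : c ≠ 0) :
    ∑ y : F, quadraticChar F y * quadraticChar F (y + c) = -1 := by
  have hJ := jacobiSum_nontrivial_inv (quadraticChar_ne_one hF)
  rw [(quadraticChar_isQuadratic F).inv, jacobiSum] at hJ
  rw [← Equiv.sum_comp (Equiv.mulLeft₀ (-c) (neg_ne_zero.2 hc))]
  calc ∑ x : F, quadraticChar F (-c * x) * quadraticChar F (-c * x + c)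
      = ∑ x : F, quadraticChar F (-1) * quadraticChar F c ^ 2 *
          (quadraticChar F x * quadraticChar F (1 - x)) := by
        refine sum_congr rfl fun x _ => ?_
        rw [show -c * x + c = c * (1 - x) by ring, show -c * x = -1 * c * x by ring]
        simp only [map_mul]
        ring
    _ = -1 := by
        rw [← mul_sum, hJ, quadraticChar_sq_one hc]
        linear_combination -quadraticChar_sq_one (neg_ne_zero.2 (one_ne_zero (α := F)))

lemma quadraticChar_sum_sq_add (hF : ringChar F ≠ 2) {c : F} (hc : c ≠ 0) :
    ∑ x : F, quadraticChar F (x ^ 2 + c) = -1 := by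
  calc ∑ x : F, quadraticChar F (x ^ 2 + c)
      = ∑ y : F, ∑ x ∈ univ.filter (fun x : F => x ^ 2 = y), quadraticChar F (x ^ 2 + c) :=
        (sum_fiberwise _ _ _).symm
    _ = ∑ y : F, (quadraticChar F y + 1) * quadraticChar F (y + c) := by
        refine sum_congr rfl fun y _ => ?_
        rw [sum_congr rfl fun x hx => by rw [(mem_filter.1 hx).2], sum_const, nsmul_eq_mul,
          ← quadraticChar_card_sqrts hF y, ← Set.toFinset_ofPred]
    _ = ∑ y : F, quadraticChar F y * quadraticChar F (y + c) +
          ∑ y : F, quadraticChar F (y + c) := by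
        rw [← sum_add_distrib]
        exact sum_congr rfl fun y _ => by ring
    _ = -1 := by
        rw [quadraticChar_sum_mul_add hF hc, Fintype.sum_equiv (Equiv.addRight c)
          (fun y => quadraticChar F (y + c)) (quadraticChar F) fun _ => rfl,
          quadraticChar_sum_zero hF, add_zero]

lemma card_le_two_mul_card_quadraticChar_sq_add_eq (hF : ringChar F ≠ 2) {d : F}
    (hd : d ≠ 0) {ε : ℤ} (hε : ε = 1 ∨ ε = -1) :
    Fintype.card F ≤ 2 * (#{x | quadraticChar F (x ^ 2 + d) = ε} : ℤ) + 2 + ε := by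
  set N : ℤ → ℕ := fun ε => #{x | quadraticChar F (x ^ 2 + d) = ε}
  show Fintype.card F ≤ 2 * (N ε : ℤ) + 2 + ε
  have hval : ∀ v : F, v = 0 ∨ quadraticChar F v = 1 ∨ quadraticChar F v = -1 := fun v =>
    (em (v = 0)).imp_right quadraticChar_dichotomy
  have hsum : ∑ x : F, quadraticChar F (x ^ 2 + d) = N 1 - N (-1) := by
    simp only [N, card_filter, Nat.cast_sum, ← sum_sub_distrib]
    refine sum_congr rfl fun x _ => ?_
    rcases hval (x ^ 2 + d) with h | h | h <;> simp [h]
  rw [quadraticChar_sum_sq_add hF hd] at hsum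
  have hpart : N 1 + N (-1) + #{x : F | x ^ 2 + d = 0} = Fintype.card F := by
    simp only [N, card_filter, ← sum_add_distrib, ← card_univ]
    rw [card_eq_sum_ones]
    refine sum_congr rfl fun x _ => ?_
    rcases hval (x ^ 2 + d) with h | h | h <;> simp [h, ← quadraticChar_eq_zero_iff (F := F)]
  have hroots : #{x : F | x ^ 2 + d = 0} ≤ 2 := by
    have h := quadraticChar_card_sqrts hF (-d)
    simp only [← eq_neg_iff_add_eq_zero]
    rw [Set.toFinset_ofPred] at h
    rcases quadraticChar_dichotomy (neg_ne_zero.2 hd) with h' | h' <;> omega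
  rcases hε with rfl | rfl <;> omega

lemma card_sub_one_le_two_mul_card_quadraticChar_eq_neg_one (hF : ringChar F ≠ 2) {a b c : F}
    (ha : a ≠ 0) (hΔ : b ^ 2 - a * c ≠ 0) :
    Fintype.card F - 1 ≤
      2 * (#{t | quadraticChar F (a * t ^ 2 + 2 * b * t + c) = -1} +
        if quadraticChar F a = -1 then 1 else 0) := by
  set d := (a * c - b ^ 2) / a ^ 2
  have hd : d ≠ 0 := div_ne_zero (fun h => hΔ (by linear_combination -h)) (pow_ne_zero 2 ha)
  have hsq : ∀ t, a * t ^ 2 + 2 * b * t + c = a * ((t + b / a) ^ 2 + d) := fun t => by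
    simp only [d]; field_simp; ring
  have hχa := quadraticChar_dichotomy ha
  have hcard : #{t | quadraticChar F (a * t ^ 2 + 2 * b * t + c) = -1} =
      #{x | quadraticChar F (x ^ 2 + d) = -quadraticChar F a} := by
    refine card_nbij' (· + b / a) (· - b / a) ?_ ?_ (fun _ _ => by simp) (fun _ _ => by simp)
    · intro t ht
      simp only [coe_filter, mem_univ, true_and, Set.mem_ofPred_eq, hsq, map_mul] at ht ⊢
      rcases hχa with h | h <;> rw [h] at ht ⊢ <;> linarith
    · intro x hx
      simp only [coe_filter, mem_univ, true_and, Set.mem_ofPred_eq, hsq, map_mul,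
        sub_add_cancel] at hx ⊢
      rcases hχa with h | h <;> rw [h] at hx ⊢ <;> linarith
  rw [hcard]
  rcases hχa with h | h
  · have := card_le_two_mul_card_quadraticChar_sq_add_eq hF hd (ε := -1) (by simp)
    simp only [h]
    rw [if_neg (by decide)]
    omega
  · have := card_le_two_mul_card_quadraticChar_sq_add_eq hF hd (ε := 1) (by simp)
    simp only [h, neg_neg, if_pos]
    omega

end CharacterSums

open Submodule

section LinearAlgebra

variable {F V : Type*} [Field F] [AddCommGroup V] [Module F V]

lemma finrank_span_pair {x y : V} (h : LinearIndependent F ![x, y]) :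
    finrank F (span F {x, y}) = 2 := by
  rw [← Matrix.range_cons_cons_empty x y ![], finrank_span_eq_card h, Fintype.card_fin]

lemma span_pair_inf_eq_span_singleton {p x : V} {l : Submodule F V} (hpl : p ∉ l) (hx : x ∈ l) :
    span F {p, x} ⊓ l = span F {x} := by
  refine le_antisymm (fun v ⟨hv, hvl⟩ => ?_) (le_inf (span_mono (by simp)) (by simpa))
  obtain ⟨a, b, rfl⟩ := mem_span_pair.1 hv
  have ha : a = 0 := by
    by_contra ha
    exact hpl ((l.smul_mem_iff ha).1 ((l.add_mem_iff_left (l.smul_mem b hx)).1 hvl))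
  simpa [ha] using smul_mem _ b (mem_span_singleton_self x)

lemma exists_linearIndependent_pair_of_finrank_eq_two (φ : V →ₗ[F] F) {l : Submodule F V}
    (hl : finrank F l = 2) :
    ∃ f ∈ l, ∃ e ∈ l, φ e = 0 ∧ LinearIndependent F ![f, e] ∧ span F {f, e} = l := by
  have : FiniteDimensional F l := .of_finrank_pos (by omega)
  obtain ⟨⟨e, he⟩, hker, he0⟩ := (Submodule.ne_bot_iff _).1
    (LinearMap.ker_ne_bot_of_finrank_lt (f := φ.comp l.subtype) (by simp [hl]))
  have he0 : e ≠ 0 := fun h => he0 (by simp [h])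
  obtain ⟨f, hf, hfe⟩ := SetLike.exists_of_lt <| lt_of_le_of_ne
    ((span_singleton_le_iff_mem _ _).2 he)
    (fun h => by rw [← h, finrank_span_singleton he0] at hl; omega)
  have hli : LinearIndependent F ![f, e] := by
    refine linearIndependent_fin2.2 ⟨by simpa using he0, fun a h => hfe ?_⟩
    simp only [Matrix.cons_val_one, Matrix.cons_val_zero] at h
    exact h ▸ smul_mem _ a (mem_span_singleton_self e)
  refine ⟨f, hf, e, he, by simpa using hker, hli, ?_⟩
  exact eq_of_le_of_finrank_eq (span_le.2 (by simp [Set.insert_subset_iff, hf, he]))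
    (by rw [finrank_span_pair hli, hl])

end LinearAlgebra

namespace LinearMap.BilinForm

variable {F V : Type*} [Field F] [AddCommGroup V] [Module F V] (B : LinearMap.BilinForm F V)

/-- `B.discForm p x x` is minus the Gram determinant of `(p, x)`. As a form in `x, y` it is
`-B p p` times `B` evaluated on the projections of `x` and `y` to the orthogonal complement
of `p`. -/
def discForm (p x y : V) : F := B p x * B p y - B p p * B x y

lemma discForm_add_smul_self (hB : B.IsSymm) (p e f : V) (t : F) :
    B.discForm p (f + t • e) (f + t • e) =
      B.discForm p e e * t ^ 2 + 2 * B.discForm p e f * t + B.discForm p f f := by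
  simp only [discForm, map_add, map_smul, LinearMap.add_apply, LinearMap.smul_apply, smul_eq_mul]
  linear_combination (B p p * t) * hB.eq e f

lemma nondegenerate_restrict_of_anisotropic {W : Submodule F V}
    (hW : ∀ v ∈ W, B v v = 0 → v = 0) : (B.restrict W).Nondegenerate :=
  ⟨fun x hx => Subtype.ext (hW x x.2 (hx x)), fun y hy => Subtype.ext (hW y y.2 (hy y))⟩

lemma anisotropic_span_pair (hB : B.IsSymm) {p x : V} (hp : B p p ≠ 0)
    (hx : ¬IsSquare (B.discForm p x x)) : ∀ v ∈ span F {p, x}, B v v = 0 → v = 0 := by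
  intro v hv hvv
  obtain ⟨a, b, rfl⟩ := mem_span_pair.1 hv
  replace hvv : a ^ 2 * B p p + 2 * a * b * B p x + b ^ 2 * B x x = 0 := by
    simp only [map_add, map_smul, LinearMap.add_apply, LinearMap.smul_apply, smul_eq_mul] at hvv
    linear_combination hvv - a * b * hB.eq x p
  obtain rfl | hb := eq_or_ne b 0
  · simp [show a = 0 by simpa [hp] using hvv]
  · refine absurd ⟨(a * B p p + b * B p x) / b, ?_⟩ hx
    rw [discForm]
    field_simp
    linear_combination -B p p * hvv

lemma isEllipticLine_span_pair (hB : B.IsSymm) {p x : V} {l : Submodule F V} (hp : B p p ≠ 0)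
    (hpl : p ∉ l) (hx : x ∈ l) (hx0 : x ≠ 0) (hns : ¬IsSquare (B.discForm p x x)) :
    IsEllipticLine B (span F {p, x}) := by
  have hli : LinearIndependent F ![p, x] := by
    refine linearIndependent_fin2.2 ⟨by simpa using hx0, fun a h => hpl ?_⟩
    simp only [Matrix.cons_val_one, Matrix.cons_val_zero] at h
    exact h ▸ l.smul_mem a hx
  have haniso := B.anisotropic_span_pair hB hp hns
  exact ⟨finrank_span_pair hli, B.nondegenerate_restrict_of_anisotropic haniso, haniso⟩

def ellipticLinesMeeting (p : V) (l : Submodule F V) : Set (Submodule F V) :=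
  {m | p ∈ m ∧ IsEllipticLine B m ∧ finrank F (m ⊓ l : Submodule F V) = 1 ∧
    (B.restrict (m ⊓ l)).Nondegenerate}

lemma span_pair_mem_ellipticLinesMeeting (hB : B.IsSymm) {p x : V} {l : Submodule F V}
    (hp : B p p ≠ 0) (hpl : p ∉ l) (hl : ∀ v ∈ l, B v v = 0 → v = 0) (hx : x ∈ l)
    (hx0 : x ≠ 0) (hns : ¬IsSquare (B.discForm p x x)) :
    span F {p, x} ∈ B.ellipticLinesMeeting p l := by
  rw [ellipticLinesMeeting, Set.mem_ofPred_eq, span_pair_inf_eq_span_singleton hpl hx,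
    finrank_span_singleton hx0]
  refine ⟨subset_span (by simp), B.isEllipticLine_span_pair hB hp hpl hx hx0 hns, rfl,
    B.nondegenerate_restrict_of_anisotropic fun v hv => hl v ?_⟩
  exact (span_singleton_le_iff_mem _ _).2 hx hv

lemma exists_discForm_ne_zero (hB : B.IsSymm) {p u : V} {l : Submodule F V} (hp : B p p ≠ 0)
    (hpl : p ∉ l) (hnd : (B.restrict (span F {p} ⊔ l)).Nondegenerate) (hu : u ∈ l)
    (hu0 : u ≠ 0) : ∃ y ∈ l, B.discForm p u y ≠ 0 := by
  by_contra! h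
  -- `w` is the component of `u` orthogonal to `p`, scaled by `B p p`; it lies in the radical.
  set w := B p p • u - B p u • p
  have hw : w ∈ span F {p} ⊔ l :=
    sub_mem (mem_sup_right (l.smul_mem _ hu))
      (mem_sup_left (smul_mem _ _ (mem_span_singleton_self p)))
  have hrad : ∀ z ∈ span F {p} ⊔ l, B w z = 0 := by
    intro z hz
    obtain ⟨_, hc, y, hy, rfl⟩ := mem_sup.1 hz
    obtain ⟨c, rfl⟩ := mem_span_singleton.1 hc
    have := h y hy
    simp only [discForm] at this
    simp only [w, map_add, map_sub, map_smul, LinearMap.sub_apply, LinearMap.smul_apply,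
      smul_eq_mul]
    linear_combination -this + c * B p p * hB.eq u p
  have hw0 : w = 0 := congrArg Subtype.val (hnd.1 ⟨w, hw⟩ fun z => hrad z z.2)
  have hpu : B p u = 0 := by
    by_contra hpu
    refine hpl ((l.smul_mem_iff hpu).1 ?_)
    rw [← sub_eq_zero.1 hw0]
    exact l.smul_mem _ hu
  simp [w, hpu, hp, hu0] at hw0

lemma discForm_sq_sub_mul_ne_zero (hB : B.IsSymm) {p e f : V} {l : Submodule F V}
    (hp : B p p ≠ 0) (hpl : p ∉ l) (hnd : (B.restrict (span F {p} ⊔ l)).Nondegenerate)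
    (hli : LinearIndependent F ![f, e]) (hspan : span F {f, e} = l)
    (he : B.discForm p e e ≠ 0) :
    B.discForm p e f ^ 2 - B.discForm p e e * B.discForm p f f ≠ 0 := by
  intro h0
  have hfl : f ∈ l := hspan ▸ subset_span (by simp)
  have hel : e ∈ l := hspan ▸ subset_span (by simp)
  set u := B.discForm p e e • f - B.discForm p e f • e
  have hu0 : u ≠ 0 := fun hu => he (LinearIndependent.pair_iff.1 hli _ (-B.discForm p e f)
    (by rw [neg_smul, ← sub_eq_add_neg]; exact hu)).1
  obtain ⟨y, hy, hne⟩ := B.exists_discForm_ne_zero hB hp hpl hnd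
    (sub_mem (l.smul_mem _ hfl) (l.smul_mem _ hel)) hu0
  rw [← hspan, mem_span_pair] at hy
  obtain ⟨s, t, rfl⟩ := hy
  apply hne
  simp only [discForm, map_add, map_sub, map_smul, LinearMap.sub_apply, LinearMap.smul_apply,
    smul_eq_mul] at h0 ⊢
  linear_combination -s * h0 + t * B p p * (B p e ^ 2 - B p p * B e e) * hB.eq e f

open Finset in
lemma card_add_ite_le_ncard_ellipticLinesMeeting [Fintype F] [DecidableEq F]
    [FiniteDimensional F V] (hB : B.IsSymm) {p e f : V} {l : Submodule F V} (hp : B p p ≠ 0)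
    (hpl : p ∉ l) (hl : ∀ v ∈ l, B v v = 0 → v = 0) (he : e ∈ l) (hf : f ∈ l)
    (hli : LinearIndependent F ![f, e]) :
    #{t : F | quadraticChar F (B.discForm p (f + t • e) (f + t • e)) = -1} +
        (if quadraticChar F (B.discForm p e e) = -1 then 1 else 0) ≤
      (B.ellipticLinesMeeting p l).ncard := by
  have : Finite V := Module.finite_of_finite F
  have hmem : ∀ x ∈ l, x ≠ 0 → quadraticChar F (B.discForm p x x) = -1 →
      span F {p, x} ∈ B.ellipticLinesMeeting p l := fun x hx hx0 h =>
    B.span_pair_mem_ellipticLinesMeeting hB hp hpl hl hx hx0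
      (quadraticChar_neg_one_iff_not_isSquare.1 h)
  have hpoint : ∀ x ∈ l, ∀ y ∈ l,
      span F {p, x} = span F {p, y} → span F {x} = span F {y} := fun x hx y hy h => by
      rw [← span_pair_inf_eq_span_singleton hpl hx, h, span_pair_inf_eq_span_singleton hpl hy]
  have hfe : ∀ t : F, f + t • e ∈ l := fun t => add_mem hf (l.smul_mem t he)
  have hfe0 : ∀ t : F, f + t • e ≠ 0 := fun t h =>
    one_ne_zero (LinearIndependent.pair_iff.1 hli 1 t (by rwa [one_smul])).1
  set Φ : F → Submodule F V := fun t => span F {p, f + t • e}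
  have hΦ : Function.Injective Φ := by
    intro t s h
    obtain ⟨u, hu⟩ := span_singleton_eq_span_singleton.1 (hpoint _ (hfe t) _ (hfe s) h)
    obtain ⟨hu1, hts⟩ := LinearIndependent.pair_iff.1 hli (u - 1) (u * t - s) (by
      rw [← sub_eq_zero.2 hu, Units.smul_def]; module)
    rw [sub_eq_zero.1 hu1, one_mul] at hts
    exact sub_eq_zero.1 hts
  set T : Finset F := {t | quadraticChar F (B.discForm p (f + t • e) (f + t • e)) = -1}
  have hT : Φ '' T ⊆ B.ellipticLinesMeeting p l := by
    rintro _ ⟨t, ht, rfl⟩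
    exact hmem _ (hfe t) (hfe0 t) (by simpa [T] using ht)
  have hcard : (Φ '' T).ncard = #T := by
    rw [Set.ncard_image_of_injective _ hΦ, Set.ncard_coe_finset]
  split_ifs with hne
  · have hnotin : span F {p, e} ∉ Φ '' T := by
      rintro ⟨t, -, h⟩
      obtain ⟨u, hu⟩ := span_singleton_eq_span_singleton.1 (hpoint _ (hfe t) _ he h)
      exact u.ne_zero (LinearIndependent.pair_iff.1 hli u (u * t - 1) (by
        rw [← sub_eq_zero.2 hu, Units.smul_def]; module)).1
    rw [← hcard, ← Set.ncard_insert_of_notMem hnotin]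
    exact Set.ncard_le_ncard (Set.insert_subset (hmem e he (hli.ne_zero 1) hne) hT)
  · rw [add_zero, ← hcard]
    exact Set.ncard_le_ncard hT

end LinearMap.BilinForm

theorem elliptic_lines_through_point_meeting_elliptic_line
    {F V : Type*} [Field F] [Fintype F] [AddCommGroup V] [Module F V]
    (q : ℕ) (hq : Fintype.card F = q) (hodd : Odd q) (hdim : 3 ≤ finrank F V)
    (B : LinearMap.BilinForm F V) (hsymm : B.IsSymm)
    (p : V) (hp : B p p ≠ 0)
    (l : Submodule F V) (hl : IsEllipticLine B l)
    (h3 : finrank F (Submodule.span F {p} ⊔ l : Submodule F V) = 3)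
    (hnd : (B.restrict (Submodule.span F {p} ⊔ l)).Nondegenerate) :
    (q - 1) / 2 ≤ Set.ncard {m : Submodule F V | p ∈ m ∧ IsEllipticLine B m ∧
      finrank F (m ⊓ l : Submodule F V) = 1 ∧ (B.restrict (m ⊓ l)).Nondegenerate} := by
  classical
  have hF : ringChar F ≠ 2 := fun h => by
    have := FiniteField.even_card_of_char_two h
    rcases hodd with ⟨k, rfl⟩
    omega
  have : FiniteDimensional F V := .of_finrank_pos (by omega)
  have hpl : p ∉ l := fun hpl => by
    rw [sup_eq_right.2 ((Submodule.span_singleton_le_iff_mem _ _).2 hpl), hl.1] at h3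
    omega
  obtain ⟨f, hf, e, he, hpe, hli, hspan⟩ :=
    exists_linearIndependent_pair_of_finrank_eq_two (B p) hl.1
  have hA : B.discForm p e e ≠ 0 := by
    simpa [LinearMap.BilinForm.discForm, hpe, hp] using fun h => hli.ne_zero 1 (hl.2.2 e he h)
  have hcount := card_sub_one_le_two_mul_card_quadraticChar_eq_neg_one hF hA
    (B.discForm_sq_sub_mul_ne_zero hsymm hp hpl hnd hli hspan hA)
  have hle := B.card_add_ite_le_ncard_ellipticLinesMeeting hsymm hp hpl hl.2.2 he hf hli
  simp only [B.discForm_add_smul_self hsymm] at hle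
  change _ ≤ (B.ellipticLinesMeeting p l).ncard
  omega
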